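/- Every graph with acyclic chromatic number at most k has push chromatic number at most k·2^{k−2}: every orientation of such a graph can be pushed to admit a homomorphism to an oriented graph on k·2^{k−2} vertices (the half of the Zielonka graph Z_k induced on vectors of coordinate sum at least ⌈k/2⌉). -/

import Mathlib

/-- An oriented graph: a loopless digraph with no 2-cycles (arc relation is asymmetric). -/
structure OGraph (V : Type) where
  arc : V → V → Prop
  asymm : ∀ u v, arc u v → ¬ arc v u

namespace OGraph

/-- Pushing a set `S` of vertices reverses exactly the arcs with exactly one endpoint in `S`. -/
def push {V : Type} (G : OGraph V) (S : Set V) : OGraph V where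
  arc u v := (Xor' (u ∈ S) (v ∈ S) ∧ G.arc v u) ∨ (¬ Xor' (u ∈ S) (v ∈ S) ∧ G.arc u v)
  asymm := by
    intro u v h h'
    have h1 := G.asymm u v
    have h2 := G.asymm v u
    unfold Xor' at h h'
    by_cases ha : u ∈ S <;> by_cases hb : v ∈ S <;> simp [ha, hb] at h h' <;> tauto

/-- Homomorphism of oriented graphs. -/
def IsHom {V W : Type} (G : OGraph V) (H : OGraph W) (f : V → W) : Prop :=
  ∀ u v, G.arc u v → H.arc (f u) (f v)

/-- Isomorphism of oriented graphs along an equivalence. -/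
def IsIso {V W : Type} (G : OGraph V) (H : OGraph W) (e : V ≃ W) : Prop :=
  ∀ u v, G.arc u v ↔ H.arc (e u) (e v)

/-- The anti-twinned graph `R(G)` on two copies of the vertices:
`inl` is the original copy, `inr` the pushed (primed) copy. -/
def antiTwin {V : Type} (G : OGraph V) : OGraph (V ⊕ V) where
  arc x y :=
    match x, y with
    | Sum.inl u, Sum.inl v => G.arc u v
    | Sum.inr u, Sum.inr v => G.arc u v
    | Sum.inl u, Sum.inr v => G.arc v u
    | Sum.inr u, Sum.inl v => G.arc v u
  asymm := by
    rintro (u | u) (v | v) h h' <;> exact G.asymm _ _ h h'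

/-- The anti-twin of a vertex of `R(G)`: `x'` with `x'' = x`. -/
def tw {V : Type} : V ⊕ V → V ⊕ V := Sum.elim Sum.inr Sum.inl

/-- `H` is an orientation of the simple graph `G`. -/
def IsOrientationOf {V : Type} (H : OGraph V) (G : SimpleGraph V) : Prop :=
  (∀ u v, H.arc u v → G.Adj u v) ∧ (∀ u v, G.Adj u v → H.arc u v ∨ H.arc v u)

end OGraph

/-- The directed 3-cycle. -/
def C3 : OGraph (Fin 3) where
  arc u v := v = u + 1
  asymm := by decide

/-- An acyclic `k`-coloring: a proper coloring in which the union of any two color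
classes induces a forest. -/
def IsAcyclicColoring {V : Type} (G : SimpleGraph V) {k : ℕ} (c : V → Fin k) : Prop :=
  (∀ u v, G.Adj u v → c u ≠ c v) ∧
  ∀ i j : Fin k, (G.induce {v | c v = i ∨ c v = j}).IsAcyclic

/-!
Fix an acyclic `k`-colouring `c` and an orientation `H`. Label every edge `uv` by whether `H`
orients it from the smaller to the larger colour. On the forest spanned by two colour classes
`{i, j}` this label is a coboundary: it is `t u xor t v` for a bit `t` on the vertices.
Recording at `v` these bits for all the forests through `c v` gives a homomorphism of `H` into
the Zielonka graph `Z_k` (Raspaud–Sopena). Pushing `v` corresponds to passing to the anti-twin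
vertex, obtained by negating all bits, so after pushing the vertices whose bit at a fixed
second colour is set, every vertex lands in one half of `Z_k`, which has `k · 2^(k-2)` vertices.
-/

open Finset in
theorem Fintype.card_subtype_forall_mem_eq {ι β : Type} [Fintype ι] [DecidableEq ι] [Fintype β]
    [DecidableEq β] (s : Finset ι) (b : β) :
    Fintype.card {α : ι → β // ∀ i ∈ s, α i = b} = Fintype.card β ^ (Fintype.card ι - #s) := by
  have : univ.filter (fun α : ι → β => ∀ i ∈ s, α i = b) =
      Fintype.piFinset fun i => if i ∈ s then {b} else univ := by
    ext α
    simp only [mem_filter, mem_univ, true_and, Fintype.mem_piFinset]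
    refine forall_congr' fun i => ?_
    split_ifs with hi <;> simp [hi]
  rw [Fintype.card_subtype, this, Fintype.card_piFinset, ← card_compl, ← prod_const]
  simp only [apply_ite Finset.card, card_singleton, card_univ]
  rw [prod_ite, prod_const_one, one_mul]
  simp [compl_eq_univ_sdiff, filter_not]

namespace SimpleGraph

variable {V : Type*} {G : SimpleGraph V}

theorem IsBridge.exists_xor_potential {a b : V} (hbr : G.IsBridge s(a, b))
    {w : V → V → Bool} (hw : ∀ u v, G.Adj u v → w u v = w v u) {t : V → Bool}
    (ht : ∀ u v, (G.deleteEdges {s(a, b)}).Adj u v → xor (t u) (t v) = w u v) :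
    ∃ t' : V → Bool, ∀ u v, G.Adj u v → xor (t' u) (t' v) = w u v := by
  classical
  set G' := G.deleteEdges {s(a, b)}
  -- flip `t` on the side of the bridge containing `a` so that the bridge gets its label
  let d := xor (t a) (xor (t b) (w a b))
  refine ⟨fun v => if G'.Reachable a v then xor d (t v) else t v, fun u v huv => ?_⟩
  by_cases he : s(u, v) = s(a, b)
  · have hb : ¬ G'.Reachable a b := isBridge_iff.1 hbr
    rcases Sym2.eq_iff.1 he with ⟨rfl, rfl⟩ | ⟨rfl, rfl⟩
    · simp only [Reachable.refl, if_true, hb, if_false, d]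
      cases t u <;> cases t v <;> cases w u v <;> rfl
    · simp only [Reachable.refl, if_true, hb, if_false, d, hw u v huv]
      cases t u <;> cases t v <;> cases w v u <;> rfl
  · have huv' : G'.Adj u v := deleteEdges_adj.2 ⟨huv, he⟩
    have hreach : G'.Reachable a u ↔ G'.Reachable a v :=
      ⟨fun h => h.trans huv'.reachable, fun h => h.trans huv'.symm.reachable⟩
    by_cases hu : G'.Reachable a u
    · simp only [hu, hreach.1 hu, if_true, ← ht u v huv']
      cases d <;> cases t u <;> cases t v <;> rfl
    · simp only [hu, mt hreach.2 hu, if_false, ht u v huv']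

theorem IsAcyclic.exists_xor_potential [Finite V] (hG : G.IsAcyclic) {w : V → V → Bool}
    (hw : ∀ u v, G.Adj u v → w u v = w v u) :
    ∃ t : V → Bool, ∀ u v, G.Adj u v → xor (t u) (t v) = w u v := by
  induction G using WellFoundedLT.induction with
  | _ G ih =>
    by_cases hE : ∃ a b, G.Adj a b
    · obtain ⟨a, b, hab⟩ := hE
      have hlt : G.deleteEdges {s(a, b)} < G :=
        (deleteEdges_le _).lt_of_ne fun h => by rw [← h] at hab; simp at hab
      obtain ⟨t, ht⟩ := ih _ hlt (hG.anti (deleteEdges_le _))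
        (fun u v huv => hw u v (deleteEdges_le _ huv))
      exact (isAcyclic_iff_forall_adj_isBridge.1 hG hab).exists_xor_potential hw ht
    · exact ⟨fun _ => false, fun u v huv => (hE ⟨u, v, huv⟩).elim⟩

theorem IsAcyclic.exists_xor_potential_of_induce [Finite V] {s : Set V}
    (hG : (G.induce s).IsAcyclic) {w : V → V → Bool} (hw : ∀ u v, G.Adj u v → w u v = w v u) :
    ∃ t : V → Bool, ∀ u ∈ s, ∀ v ∈ s, G.Adj u v → xor (t u) (t v) = w u v := by
  classical
  obtain ⟨t, ht⟩ := hG.exists_xor_potential (w := fun x y => w x y) fun x y h => hw x y h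
  exact ⟨fun v => if h : v ∈ s then t ⟨v, h⟩ else false, fun u hu v hv huv => by
    simpa [hu, hv] using ht ⟨u, hu⟩ ⟨v, hv⟩ huv⟩

end SimpleGraph

namespace OGraph

variable {V W : Type}

theorem arc_push_of_iff {G : OGraph V} {S : Set V} {u v : V} (h : u ∈ S ↔ v ∈ S) :
    (G.push S).arc u v ↔ G.arc u v := by
  change (Xor _ _ ∧ _) ∨ (¬ Xor _ _ ∧ _) ↔ _
  simp only [xor_def, h]
  tauto

theorem arc_push_of_not_iff {G : OGraph V} {S : Set V} {u v : V} (h : ¬ (u ∈ S ↔ v ∈ S)) :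
    (G.push S).arc u v ↔ G.arc v u := by
  change (Xor _ _ ∧ _) ∨ (¬ Xor _ _ ∧ _) ↔ _
  simp only [xor_def]
  tauto

theorem IsHom.comp {U : Type} {G : OGraph U} {H : OGraph V} {K : OGraph W} {f : U → V}
    {g : V → W} (hg : H.IsHom K g) (hf : G.IsHom H f) : G.IsHom K (g ∘ f) :=
  fun u v huv => hg _ _ (hf u v huv)

/-- `τ` plays the role of the anti-twin map `x ↦ x'` of a splitable target. -/
theorem IsHom.push {G : OGraph V} {K : OGraph W} {f : V → W} (hf : G.IsHom K f) {τ : W → W}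
    (hτ_left : ∀ x y, K.arc (τ x) y ↔ K.arc y x) (hτ_right : ∀ x y, K.arc x (τ y) ↔ K.arc y x)
    (S : Set V) [DecidablePred (· ∈ S)] :
    (G.push S).IsHom K (fun v => if v ∈ S then τ (f v) else f v) := by
  intro u v huv
  by_cases hu : u ∈ S <;> by_cases hv : v ∈ S <;>
    simp only [hu, hv, iff_true, iff_false, not_true_eq_false, not_false_eq_true, arc_push_of_iff,
      arc_push_of_not_iff, ↓reduceIte, hτ_left, hτ_right] at huv ⊢ <;>
    exact hf _ _ huv

def induce (G : OGraph V) (s : Set V) : OGraph s where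
  arc x y := G.arc x y
  asymm x y := G.asymm x y

theorem IsHom.codRestrict {G : OGraph V} {K : OGraph W} {f : V → W} (hf : G.IsHom K f)
    {s : Set W} (hs : ∀ v, f v ∈ s) : G.IsHom (K.induce s) (Set.codRestrict f s hs) :=
  hf

end OGraph

/-- The bit `α i` of a vertex `(i, α)` plays no role in the arcs, so this is `Z_k` with every
vertex doubled. -/
def zielonka (k : ℕ) : OGraph (Fin k × (Fin k → Bool)) where
  arc x y := x.1 ≠ y.1 ∧ xor (x.2 y.1) (y.2 x.1) = decide (x.1 < y.1)
  asymm x y := by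
    rintro ⟨hne, hxy⟩ ⟨-, hyx⟩
    rw [Bool.xor_comm, hxy] at hyx
    rcases hne.lt_or_gt with h | h <;> simp [h, h.not_gt] at hyx

namespace zielonka

variable {k : ℕ}

def twin (x : Fin k × (Fin k → Bool)) : Fin k × (Fin k → Bool) := (x.1, fun j => !x.2 j)

theorem twin_twin (x : Fin k × (Fin k → Bool)) : twin (twin x) = x := by
  simp [twin]

theorem arc_twin_left (x y : Fin k × (Fin k → Bool)) :
    (zielonka k).arc (twin x) y ↔ (zielonka k).arc y x := by
  simp only [zielonka, twin]
  constructor <;> rintro ⟨hne, h⟩ <;> refine ⟨hne.symm, ?_⟩ <;>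
    rcases hne.lt_or_gt with hlt | hlt <;> simp_all [hlt.not_gt, Bool.xor_comm]

theorem arc_twin_right (x y : Fin k × (Fin k → Bool)) :
    (zielonka k).arc x (twin y) ↔ (zielonka k).arc y x := by
  conv_lhs => rw [← twin_twin x]
  rw [arc_twin_left, arc_twin_left, arc_twin_left]

def clearDiag (x : Fin k × (Fin k → Bool)) : Fin k × (Fin k → Bool) :=
  (x.1, Function.update x.2 x.1 false)

theorem arc_clearDiag_left (x y : Fin k × (Fin k → Bool)) :
    (zielonka k).arc (clearDiag x) y ↔ (zielonka k).arc x y :=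
  and_congr_right fun (hne : x.1 ≠ y.1) => by
    rw [show (clearDiag x).2 y.1 = x.2 y.1 from Function.update_of_ne hne.symm _ _]; rfl

theorem arc_clearDiag_right (x y : Fin k × (Fin k → Bool)) :
    (zielonka k).arc x (clearDiag y) ↔ (zielonka k).arc x y :=
  and_congr_right fun (hne : x.1 ≠ y.1) => by
    rw [show (clearDiag y).2 x.1 = y.2 x.1 from Function.update_of_ne hne _ _]; rfl

theorem isHom_clearDiag : (zielonka k).IsHom (zielonka k) clearDiag := fun x y h => by
  rwa [arc_clearDiag_left, arc_clearDiag_right]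

/-- Fixing the bit at `finRotate k i`, a colour other than `i` once `k ≥ 2`, keeps exactly one
of each pair `x, twin x` (up to the irrelevant bit); the paper keeps instead the labels of
coordinate sum at least `⌈k/2⌉`. -/
def half (k : ℕ) : Set (Fin k × (Fin k → Bool)) :=
  {x | x.2 x.1 = false ∧ x.2 (finRotate k x.1) = false}

instance (k : ℕ) : DecidablePred (· ∈ half k) := fun _ => inferInstanceAs (Decidable (_ ∧ _))

theorem card_half (k : ℕ) : Fintype.card (half k) = k * 2 ^ (k - 2) := by
  have hfiber (i : Fin k) :
      Fintype.card {α : Fin k → Bool // α i = false ∧ α (finRotate k i) = false} =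
        2 ^ (k - 2) := by
    rw [Fintype.card_congr (Equiv.subtypeEquivRight
      (q := fun α => ∀ j ∈ ({i, finRotate k i} : Finset (Fin k)), α j = false) fun α => by simp)]
    convert Fintype.card_subtype_forall_mem_eq ({i, finRotate k i} : Finset (Fin k)) false
      using 2
    · exact Fintype.card_bool.symm
    rw [Fintype.card_fin]
    rcases lt_or_ge k 2 with hk | hk
    · have : finRotate k i = i := by
        have := Fin.subsingleton_iff_le_one.2 (by omega : k ≤ 1)
        exact Subsingleton.elim _ _
      rw [this, Finset.pair_eq_singleton, Finset.card_singleton]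
      omega
    · have : finRotate k i ≠ i := Equiv.Perm.mem_support.1 (by simp [support_finRotate_of_le hk])
      rw [Finset.card_pair this.symm]
  calc Fintype.card (half k)
      = Fintype.card (Σ i : Fin k, {α : Fin k → Bool // α i = false ∧ α (finRotate k i) = false}) :=
        Fintype.card_congr (Equiv.subtypeProdEquivSigmaSubtype
          (p := fun i (α : Fin k → Bool) => α i = false ∧ α (finRotate k i) = false))
    _ = k * 2 ^ (k - 2) := by
        simp only [Fintype.card_sigma, hfiber, Finset.sum_const, Finset.card_univ,
          Fintype.card_fin, smul_eq_mul]

theorem clearDiag_mem_half {x : Fin k × (Fin k → Bool)} (h : x.2 (finRotate k x.1) = false) :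
    clearDiag x ∈ half k := by
  refine ⟨Function.update_self .., ?_⟩
  by_cases hr : finRotate k x.1 = x.1
  · show Function.update x.2 x.1 false (finRotate k x.1) = false
    rw [hr, Function.update_self]
  · exact (Function.update_of_ne hr ..).trans h

theorem clearDiag_ite_twin_mem_half (x : Fin k × (Fin k → Bool)) :
    clearDiag (if x.2 (finRotate k x.1) = true then twin x else x) ∈ half k := by
  split_ifs with h
  · exact clearDiag_mem_half (by simp only [twin, h, Bool.not_true])
  · exact clearDiag_mem_half (by simpa only [Bool.not_eq_true] using h)

end zielonka

theorem exists_isHom_zielonka {V : Type} [Finite V] {G : SimpleGraph V} {k : ℕ} {c : V → Fin k}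
    (hc : IsAcyclicColoring G c) {H : OGraph V} (hH : H.IsOrientationOf G) :
    ∃ b : V → Fin k → Bool, H.IsHom (zielonka k) fun v => (c v, b v) := by
  classical
  let w : V → V → Bool := fun u v => decide (H.arc u v ∧ c u < c v ∨ H.arc v u ∧ c v < c u)
  have hT (e : Sym2 (Fin k)) : ∃ t : V → Bool,
      ∀ u ∈ {v | c v ∈ e}, ∀ v ∈ {v | c v ∈ e}, G.Adj u v → xor (t u) (t v) = w u v := by
    refine SimpleGraph.IsAcyclic.exists_xor_potential_of_induce ?_ fun u v _ => ?_
    · induction e using Sym2.ind with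
      | _ i j =>
        rw [show {v | c v ∈ s(i, j)} = {v | c v = i ∨ c v = j} from
          Set.ext fun _ => Sym2.mem_iff]
        exact hc.2 i j
    · exact decide_eq_decide.2 or_comm
  choose T hT using hT
  refine ⟨fun v j => T s(c v, j) v, fun u v huv => ⟨hc.1 u v (hH.1 u v huv), ?_⟩⟩
  have h := hT s(c u, c v) u (Sym2.mem_mk_left _ _) v (Sym2.mem_mk_right _ _) (hH.1 u v huv)
  show xor (T s(c u, c v) u) (T s(c v, c u) v) = decide (c u < c v)
  rw [Sym2.eq_swap (a := c v)]
  simpa [w, huv, H.asymm _ _ huv] using h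

/-- Every graph with acyclic chromatic number at most `k` has push
chromatic number at most `k·2^{k-2}`: every orientation of such a graph can be pushed to
admit a homomorphism to some oriented graph on `k·2^{k-2}` vertices. -/
theorem acyclic_chromatic_bounds_push_chromatic {V : Type} [Fintype V]
    (Gr : SimpleGraph V) (k : ℕ) (hc : ∃ c : V → Fin k, IsAcyclicColoring Gr c)
    (H : OGraph V) (hH : OGraph.IsOrientationOf H Gr) :
    ∃ (W : Type) (inst : Fintype W) (K : OGraph W),
      @Fintype.card W inst = k * 2 ^ (k - 2) ∧
      ∃ (S : Set V) (f : V → W), OGraph.IsHom (H.push S) K f := by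
  obtain ⟨c, hc⟩ := hc
  obtain ⟨b, hb⟩ := exists_isHom_zielonka hc hH
  have hpush := zielonka.isHom_clearDiag.comp
    (hb.push zielonka.arc_twin_left zielonka.arc_twin_right {v | b v (finRotate k (c v)) = true})
  exact ⟨zielonka.half k, inferInstance, (zielonka k).induce (zielonka.half k),
    zielonka.card_half k, _, _,
    hpush.codRestrict fun v => zielonka.clearDiag_ite_twin_mem_half (c v, b v)⟩
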